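/- arXiv:math/0102053 — 3 statements merged into one kernel-verified Lean document; each statement's English description precedes it below -/
import Mathlib

section
/- Dimonoid calculus: Let X be a dimonoid and let x_i ∈ X. (a) Any parenthesizing of the word x_{-n} ⊢ x_{-n+1} ⊢ ⋯ ⊢ x_{-1} ⊢ x_0 ⊣ x_1 ⊣ ⋯ ⊣ x_m gives the same element of X, denoted x_{-n}⋯x_{-1} x̌_0 x_1⋯x_m. (b) Any monomial in x_1,…,x_k (a choice of a full parenthesizing together with a choice of ⊣ or ⊢ at each vertex of the corresponding planar binary tree) equals x_1⋯x̌_i⋯x_k, where x_i is the middle entry of the monomial, i.e. the leaf reached by starting at the root of the labelled binary tree and going up, at every vertex choosing the branch indicated by the pointer of the product label at that vertex. (c) One has (x_1⋯x̌_i⋯x_k) ⊣ (x_{k+1}⋯x̌_j⋯x_ℓ) = x_1⋯x̌_i⋯x_ℓ and (x_1⋯x̌_i⋯x_k) ⊢ (x_{k+1}⋯x̌_j⋯x_ℓ) = x_1⋯x̌_j⋯x_ℓ. -/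
/-- An (associative) dimonoid: a set with two binary operations `⊣` (`dashv`) and
`⊢` (`vdash`) satisfying the five dimonoid axioms. -/
class Dimonoid (X : Type*) where
  dashv : X → X → X
  vdash : X → X → X
  ax1 : ∀ x y z : X, dashv (dashv x y) z = dashv x (dashv y z)
  ax2 : ∀ x y z : X, dashv x (dashv y z) = dashv x (vdash y z)
  ax3 : ∀ x y z : X, dashv (vdash x y) z = vdash x (dashv y z)
  ax4 : ∀ x y z : X, vdash (dashv x y) z = vdash x (vdash y z)
  ax5 : ∀ x y z : X, vdash (vdash x y) z = vdash x (vdash y z)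

/-- The normal form `x₋ₙ ⋯ x₋₁ x̌₀ x₁ ⋯ xₘ`, i.e.
`(x₋ₙ ⊢ ⋯ ⊢ x₋₁) ⊢ x₀ ⊣ (x₁ ⊣ ⋯ ⊣ xₘ)`; well defined since `⊣` and `⊢` are
associative. -/
def Dimonoid.norm {X : Type*} [Dimonoid X] (l : List X) (x : X) (r : List X) : X :=
  r.foldl (fun b a => Dimonoid.dashv b a) (l.foldr (fun a b => Dimonoid.vdash a b) x)

/-- A monomial in a dimonoid: a full parenthesizing of a word, with a choice of
`⊣` or `⊢` at each vertex of the corresponding planar binary tree. -/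
inductive DiWord (X : Type*) : Type _
  | leaf : X → DiWord X
  | dashv : DiWord X → DiWord X → DiWord X
  | vdash : DiWord X → DiWord X → DiWord X

namespace DiWord

variable {X : Type*}

/-- The list of leaves (entries) of a monomial, from left to right. -/
def leaves : DiWord X → List X
  | leaf x => [x]
  | dashv a b => leaves a ++ leaves b
  | vdash a b => leaves a ++ leaves b

/-- The number of leaves of a monomial. -/
def size (t : DiWord X) : ℕ := t.leaves.length

/-- The position (0-indexed) of the middle entry of a monomial: starting at the root,
go up choosing at every vertex the branch indicated by the pointer of the product
label (`⊣` points to the left factor, `⊢` points to the right factor). -/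
def midIdx : DiWord X → ℕ
  | leaf _ => 0
  | dashv a _ => midIdx a
  | vdash a b => a.size + midIdx b

/-- The middle entry of a monomial (the abutment of the pointer path from the root). -/
def mid : DiWord X → X
  | leaf x => x
  | dashv a _ => mid a
  | vdash _ b => mid b

/-- Evaluation of a monomial in a dimonoid. -/
def eval [Dimonoid X] : DiWord X → X
  | leaf x => x
  | dashv a b => Dimonoid.dashv (eval a) (eval b)
  | vdash a b => Dimonoid.vdash (eval a) (eval b)

/-- `Shaped n off t` says that the monomial `t`, whose leaves occupy the (global)
positions `off, off+1, …` of a word whose distinguished letter `x₀` is at global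
position `n`, is a parenthesizing of (a segment of) the word
`x₋ₙ ⊢ ⋯ ⊢ x₋₁ ⊢ x₀ ⊣ x₁ ⊣ ⋯ ⊣ xₘ`: a vertex whose split point lies at or to the
left of `x₀` carries `⊢`, and a vertex whose split point lies strictly to the right
of `x₀` carries `⊣`. -/
def Shaped (n : ℕ) : ℕ → DiWord X → Prop
  | _, leaf _ => True
  | off, dashv a b => n < off + a.size ∧ Shaped n off a ∧ Shaped n (off + a.size) b
  | off, vdash a b => off + a.size ≤ n ∧ Shaped n off a ∧ Shaped n (off + a.size) b

end DiWord


/-! By the axioms, `a ⊣ w` depends only on the letters of `w`, all multiplied with `⊣`, and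
dually `w ⊢ c` only on the letters of `w` multiplied with `⊢`; since moreover a left factor `⊢`
commutes with a right factor `⊣`, both products of two normal forms are normal forms (c).
Part (b) follows by induction on the monomial, the middle entry of `a ⊣ b` being that of `a` and
the middle entry of `a ⊢ b` that of `b`. In a parenthesizing of `x₋ₙ ⊢ ⋯ ⊢ x₀ ⊣ ⋯ ⊣ xₘ` the
labels force the middle entry to be `x₀`, so (a) is a case of (b). -/

namespace Dimonoid

variable {X : Type*} [Dimonoid X]

theorem dashv_foldl_dashv (a b : X) (r : List X) :
    dashv a (r.foldl dashv b) = r.foldl dashv (dashv a b) := by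
  induction r generalizing b with
  | nil => rfl
  | cons y r ih => simp only [List.foldl_cons, ih, ax1]

theorem vdash_foldl_dashv (a b : X) (r : List X) :
    vdash a (r.foldl dashv b) = r.foldl dashv (vdash a b) := by
  induction r generalizing b with
  | nil => rfl
  | cons y r ih => simp only [List.foldl_cons, ih, ax3]

theorem dashv_foldr_vdash (a x : X) (l : List X) :
    dashv a (l.foldr vdash x) = dashv (l.foldl dashv a) x := by
  induction l generalizing a with
  | nil => rfl
  | cons y l ih =>
    simp only [List.foldr_cons, List.foldl_cons, ← ax2, ← ax1, ih, dashv_foldl_dashv]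

theorem foldr_vdash_vdash (x c : X) (l : List X) :
    vdash (l.foldr vdash x) c = l.foldr vdash (vdash x c) := by
  induction l with
  | nil => rfl
  | cons y l ih => simp only [List.foldr_cons, ax5, ih]

theorem foldl_dashv_vdash (b c : X) (r : List X) :
    vdash (r.foldl dashv b) c = vdash b (r.foldr vdash c) := by
  induction r generalizing b with
  | nil => rfl
  | cons y r ih => simp only [List.foldl_cons, List.foldr_cons, ih, ax4]

theorem dashv_norm (a : X) (l : List X) (x : X) (r : List X) :
    dashv a (norm l x r) = (l ++ x :: r).foldl dashv a := by
  rw [norm, dashv_foldl_dashv, dashv_foldr_vdash, List.foldl_append, List.foldl_cons]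

theorem norm_vdash (l : List X) (x : X) (r : List X) (c : X) :
    vdash (norm l x r) c = (l ++ x :: r).foldr vdash c := by
  rw [norm, foldl_dashv_vdash, foldr_vdash_vdash, List.foldr_append, List.foldr_cons]

theorem foldr_vdash_norm (k l : List X) (x : X) (r : List X) :
    k.foldr vdash (norm l x r) = norm (k ++ l) x r := by
  induction k with
  | nil => rfl
  | cons y k ih => rw [List.foldr_cons, ih, norm, vdash_foldl_dashv]; rfl

theorem dashv_norm_norm (l₁ r₁ l₂ r₂ : List X) (x₁ x₂ : X) :
    dashv (norm l₁ x₁ r₁) (norm l₂ x₂ r₂) = norm l₁ x₁ (r₁ ++ l₂ ++ x₂ :: r₂) := by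
  rw [dashv_norm, norm, norm, ← List.foldl_append, List.append_assoc]

theorem vdash_norm_norm (l₁ r₁ l₂ r₂ : List X) (x₁ x₂ : X) :
    vdash (norm l₁ x₁ r₁) (norm l₂ x₂ r₂) = norm (l₁ ++ x₁ :: (r₁ ++ l₂)) x₂ r₂ := by
  rw [norm_vdash, foldr_vdash_norm]
  simp

end Dimonoid

namespace DiWord

variable {X : Type*}

theorem size_vdash (a b : DiWord X) : (vdash a b).size = a.size + b.size := by
  simp [size, leaves]

theorem exists_eval_eq_norm_at_mid [Dimonoid X] (t : DiWord X) :
    ∃ l r, t.leaves = l ++ t.mid :: r ∧ l.length = t.midIdx ∧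
      t.eval = Dimonoid.norm l t.mid r := by
  induction t with
  | leaf x => exact ⟨[], [], rfl, rfl, rfl⟩
  | dashv a b iha ihb =>
    obtain ⟨la, ra, ha, hla, hea⟩ := iha
    obtain ⟨lb, rb, hb, -, heb⟩ := ihb
    refine ⟨la, ra ++ lb ++ b.mid :: rb, ?_, hla, ?_⟩
    · simp [leaves, mid, ha, hb]
    · rw [eval, hea, heb, Dimonoid.dashv_norm_norm, mid]
  | vdash a b iha ihb =>
    obtain ⟨la, ra, ha, -, hea⟩ := iha
    obtain ⟨lb, rb, hb, hlb, heb⟩ := ihb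
    refine ⟨la ++ a.mid :: (ra ++ lb), rb, ?_, ?_, ?_⟩
    · simp [leaves, mid, ha, hb]
    · simp only [List.length_append, List.length_cons, hlb, midIdx, size, ha]
      omega
    · rw [eval, hea, heb, Dimonoid.vdash_norm_norm, mid]

theorem eval_eq_norm_take_drop [Dimonoid X] (t : DiWord X) :
    t.eval = Dimonoid.norm (t.leaves.take t.midIdx) t.mid (t.leaves.drop (t.midIdx + 1)) := by
  obtain ⟨l, r, hsplit, hlen, heval⟩ := t.exists_eval_eq_norm_at_mid
  rw [heval, hsplit, ← hlen]
  simp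

theorem Shaped.off_add_midIdx {n off : ℕ} {t : DiWord X} (h : t.Shaped n off)
    (hle : off ≤ n) (hlt : n < off + t.size) : off + t.midIdx = n := by
  induction t generalizing off with
  | leaf x =>
    simp only [size, leaves, List.length_singleton] at hlt
    simp only [midIdx]
    omega
  | dashv a b iha _ => exact iha h.2.1 hle h.1
  | vdash a b _ ihb =>
    rw [size_vdash] at hlt
    have := ihb h.2.2 h.1 (by omega)
    simp only [midIdx]
    omega

theorem eval_eq_norm_of_shaped [Dimonoid X] {l r : List X} {x : X} {t : DiWord X}
    (hleaves : t.leaves = l ++ x :: r) (hshaped : t.Shaped l.length 0) :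
    t.eval = Dimonoid.norm l x r := by
  obtain ⟨l', r', hsplit, hlen, heval⟩ := t.exists_eval_eq_norm_at_mid
  have hmid : t.midIdx = l.length := by
    simpa using hshaped.off_add_midIdx (Nat.zero_le _) (by simp [size, hleaves])
  obtain ⟨rfl, hcons⟩ := List.append_inj (hsplit.symm.trans hleaves) (hlen.trans hmid)
  obtain ⟨hx, rfl⟩ := List.cons.inj hcons
  rw [heval, hx]

end DiWord

open Dimonoid in
/-- **Dimonoid calculus** (Loday, Theorem 1.7).  Let `X` be a dimonoid.

(a) Any parenthesizing of `x₋ₙ ⊢ ⋯ ⊢ x₋₁ ⊢ x₀ ⊣ x₁ ⊣ ⋯ ⊣ xₘ` gives the same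
element of `X`, namely the normal form `x₋ₙ ⋯ x₋₁ x̌₀ x₁ ⋯ xₘ`.

(b) Any monomial equals the normal form on its leaves, checked at its middle entry.

(c) `(x₁⋯x̌ᵢ⋯x_k) ⊣ (x_{k+1}⋯x̌ⱼ⋯x_ℓ) = x₁⋯x̌ᵢ⋯x_ℓ` and
`(x₁⋯x̌ᵢ⋯x_k) ⊢ (x_{k+1}⋯x̌ⱼ⋯x_ℓ) = x₁⋯x̌ⱼ⋯x_ℓ`. -/
theorem dimonoid_calculus {X : Type*} [Dimonoid X] :
    (∀ (l r : List X) (x : X) (t : DiWord X),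
      t.leaves = l ++ x :: r → DiWord.Shaped l.length 0 t →
        t.eval = norm l x r) ∧
    (∀ t : DiWord X,
      t.eval = norm (t.leaves.take t.midIdx) t.mid (t.leaves.drop (t.midIdx + 1))) ∧
    (∀ (l₁ r₁ l₂ r₂ : List X) (x₁ x₂ : X),
      Dimonoid.dashv (norm l₁ x₁ r₁) (norm l₂ x₂ r₂) =
          norm l₁ x₁ (r₁ ++ l₂ ++ x₂ :: r₂) ∧
      Dimonoid.vdash (norm l₁ x₁ r₁) (norm l₂ x₂ r₂) =
          norm (l₁ ++ x₁ :: (r₁ ++ l₂)) x₂ r₂) :=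
  ⟨fun _ _ _ _ => DiWord.eval_eq_norm_of_shaped, DiWord.eval_eq_norm_take_drop,
    fun _ _ _ _ _ _ => ⟨dashv_norm_norm .., vdash_norm_norm ..⟩⟩
end

section
/- The free dimonoid on a set X is D(X) = ⊔_{n≥1} (X^n ⊔ ⋯ ⊔ X^n) (n disjoint copies of X^n in the n-th summand), where the element of the i-th copy of X^n corresponding to (x_1,…,x_n) is denoted x_1⋯x̌_i⋯x_n, with products (x_1⋯x̌_i⋯x_k) ⊣ (x_{k+1}⋯x̌_j⋯x_ℓ) = x_1⋯x̌_i⋯x_ℓ and (x_1⋯x̌_i⋯x_k) ⊢ (x_{k+1}⋯x̌_j⋯x_ℓ) = x_1⋯x̌_j⋯x_ℓ. That is: these products make D(X) a dimonoid, and the map X → D(X), x ↦ x̌ (the element of the n = 1 summand), is universal: every map from X to a dimonoid Y extends uniquely to a dimonoid morphism D(X) → Y. -/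
/-- The underlying set of the free dimonoid on `X`:
`⊔_{n≥1} (Xⁿ ⊔ ⋯ ⊔ Xⁿ)` (`n` copies of `Xⁿ` in the `n`-th summand); the element
`x₁⋯x̌ᵢ⋯xₙ` of the `i`-th copy of `Xⁿ` is recorded as the triple
`(x₁⋯x_{i-1}, xᵢ, x_{i+1}⋯xₙ)` consisting of the letters before the check, the
checked letter, and the letters after the check. -/
structure FreeDimonoid (X : Type*) : Type _ where
  pre : List X
  mid : X
  post : List X

namespace FreeDimonoid

variable {X : Type*}

/-- The left product on the free dimonoid:
`(x₁⋯x̌ᵢ⋯x_k) ⊣ (x_{k+1}⋯x̌ⱼ⋯x_ℓ) = x₁⋯x̌ᵢ⋯x_ℓ`. -/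
def fdashv (a b : FreeDimonoid X) : FreeDimonoid X :=
  ⟨a.pre, a.mid, a.post ++ b.pre ++ b.mid :: b.post⟩

/-- The right product on the free dimonoid:
`(x₁⋯x̌ᵢ⋯x_k) ⊢ (x_{k+1}⋯x̌ⱼ⋯x_ℓ) = x₁⋯x̌ⱼ⋯x_ℓ`. -/
def fvdash (a b : FreeDimonoid X) : FreeDimonoid X :=
  ⟨a.pre ++ a.mid :: (a.post ++ b.pre), b.mid, b.post⟩

/-- The canonical inclusion `X → D(X)`, `x ↦ x̌` (the `n = 1` summand). -/
def incl (x : X) : FreeDimonoid X := ⟨[], x, []⟩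

end FreeDimonoid


section Aux

variable {X : Type*} {Y : Type*} [Dimonoid Y]

open Dimonoid

/-- Left fold by `⊣`. -/
def Daux (f : X → Y) (y : Y) (l : List X) : Y :=
  l.foldl (fun a x => dashv a (f x)) y

/-- Right fold by `⊢`. -/
def Vaux (f : X → Y) (l : List X) (y : Y) : Y :=
  l.foldr (fun x a => vdash (f x) a) y

lemma Daux_append (f : X → Y) (y : Y) (l₁ l₂ : List X) :
    Daux f y (l₁ ++ l₂) = Daux f (Daux f y l₁) l₂ := by
  simp [Daux, List.foldl_append]

lemma Vaux_append (f : X → Y) (l₁ l₂ : List X) (y : Y) :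
    Vaux f (l₁ ++ l₂) y = Vaux f l₁ (Vaux f l₂ y) := by
  simp [Vaux, List.foldr_append]

lemma Daux_dashv (f : X → Y) (u v : Y) (r : List X) :
    Daux f (dashv u v) r = dashv u (Daux f v r) := by
  induction r generalizing v with
  | nil => rfl
  | cons x r ih => simp only [Daux, List.foldl_cons] at ih ⊢; rw [ax1, ih]

lemma lemA (f : X → Y) (u : Y) (l : List X) (m : X) (r : List X) :
    Daux f u (l ++ m :: r) = dashv u (Vaux f l (Daux f (f m) r)) := by
  induction l generalizing u with
  | nil =>
    simp only [List.nil_append, Vaux, List.foldr_nil, Daux, List.foldl_cons]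
    exact Daux_dashv f u (f m) r
  | cons x l ih =>
    simp only [List.cons_append, Daux, List.foldl_cons, Vaux, List.foldr_cons] at ih ⊢
    rw [ih, ← ax2, ax1]

lemma lemB (f : X → Y) (l : List X) (y z : Y) :
    Vaux f l (dashv y z) = dashv (Vaux f l y) z := by
  induction l with
  | nil => rfl
  | cons x l ih => simp only [Vaux, List.foldr_cons] at ih ⊢; rw [ih, ax3]

lemma lemC (f : X → Y) (l : List X) (y z : Y) :
    vdash (Vaux f l y) z = Vaux f l (vdash y z) := by
  induction l with
  | nil => rfl
  | cons x l ih => simp only [Vaux, List.foldr_cons] at ih ⊢; rw [ax5, ih]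

lemma lemD (f : X → Y) (y : Y) (l : List X) (z : Y) :
    vdash (Daux f y l) z = vdash y (Vaux f l z) := by
  induction l generalizing y with
  | nil => rfl
  | cons x l ih => simp only [Daux, List.foldl_cons, Vaux, List.foldr_cons] at ih ⊢
                   rw [ih, ax4]

/-- The evaluation map. -/
def phiAux (f : X → Y) (a : FreeDimonoid X) : Y :=
  Vaux f a.pre (Daux f (f a.mid) a.post)

lemma phiAux_fdashv (f : X → Y) (a b : FreeDimonoid X) :
    phiAux f (FreeDimonoid.fdashv a b) = dashv (phiAux f a) (phiAux f b) := by
  simp only [phiAux, FreeDimonoid.fdashv, List.append_assoc, Daux_append,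
    lemA f (Daux f (f a.mid) a.post) b.pre b.mid b.post, ← lemB]

lemma phiAux_fvdash (f : X → Y) (a b : FreeDimonoid X) :
    phiAux f (FreeDimonoid.fvdash a b) = vdash (phiAux f a) (phiAux f b) := by
  simp only [phiAux, FreeDimonoid.fvdash, Vaux_append, lemC, lemD]
  simp only [Vaux, List.foldr_cons, List.foldr_append]

end Aux

/-- **The free dimonoid** (Loday, Corollary 1.8).  The products
`(x₁⋯x̌ᵢ⋯x_k) ⊣ (x_{k+1}⋯x̌ⱼ⋯x_ℓ) = x₁⋯x̌ᵢ⋯x_ℓ` and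
`(x₁⋯x̌ᵢ⋯x_k) ⊢ (x_{k+1}⋯x̌ⱼ⋯x_ℓ) = x₁⋯x̌ⱼ⋯x_ℓ` make
`D(X) = ⊔_{n≥1}(Xⁿ ⊔ ⋯ ⊔ Xⁿ)` a dimonoid, and the map `x ↦ x̌` is universal:
every map from `X` to a dimonoid `Y` extends uniquely to a morphism of dimonoids
`D(X) → Y`. -/
theorem freeDimonoid_is_free (X : Type*) :
    (∀ a b c : FreeDimonoid X,
        FreeDimonoid.fdashv (FreeDimonoid.fdashv a b) c
          = FreeDimonoid.fdashv a (FreeDimonoid.fdashv b c) ∧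
        FreeDimonoid.fdashv a (FreeDimonoid.fdashv b c)
          = FreeDimonoid.fdashv a (FreeDimonoid.fvdash b c) ∧
        FreeDimonoid.fdashv (FreeDimonoid.fvdash a b) c
          = FreeDimonoid.fvdash a (FreeDimonoid.fdashv b c) ∧
        FreeDimonoid.fvdash (FreeDimonoid.fdashv a b) c
          = FreeDimonoid.fvdash a (FreeDimonoid.fvdash b c) ∧
        FreeDimonoid.fvdash (FreeDimonoid.fvdash a b) c
          = FreeDimonoid.fvdash a (FreeDimonoid.fvdash b c)) ∧
    (∀ (Y : Type*) [Dimonoid Y] (f : X → Y),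
      ∃! φ : FreeDimonoid X → Y,
        (∀ a b : FreeDimonoid X,
            φ (FreeDimonoid.fdashv a b) = Dimonoid.dashv (φ a) (φ b)) ∧
        (∀ a b : FreeDimonoid X,
            φ (FreeDimonoid.fvdash a b) = Dimonoid.vdash (φ a) (φ b)) ∧
        (∀ x : X, φ (FreeDimonoid.incl x) = f x)) := by
  constructor
  · intro a b c
    refine ⟨?_, ?_, ?_, ?_, ?_⟩ <;>
      simp [FreeDimonoid.fdashv, FreeDimonoid.fvdash, List.append_assoc]
  · intro Y _ f
    refine ⟨phiAux f, ⟨phiAux_fdashv f, phiAux_fvdash f, fun x => rfl⟩, ?_⟩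
    rintro ψ ⟨hd, hv, hi⟩
    funext a
    obtain ⟨l, m, r⟩ := a
    induction l with
    | cons x l ih =>
      have h1 : (⟨x :: l, m, r⟩ : FreeDimonoid X)
          = FreeDimonoid.fvdash (FreeDimonoid.incl x) ⟨l, m, r⟩ := by
        simp [FreeDimonoid.fvdash, FreeDimonoid.incl]
      rw [h1, hv, phiAux_fvdash, ih, hi]
      rfl
    | nil =>
      induction r using List.reverseRecOn with
      | nil => exact hi m
      | append_singleton r x ih =>
        have h1 : (⟨[], m, r ++ [x]⟩ : FreeDimonoid X)
            = FreeDimonoid.fdashv ⟨[], m, r⟩ (FreeDimonoid.incl x) := by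
          simp [FreeDimonoid.fdashv, FreeDimonoid.incl]
        rw [h1, hd, phiAux_fdashv, ih, hi]
        rfl
end

section
/- Let D be an associative dialgebra and E a dendriform algebra over a field K. Then the bracket on D⊗E defined on generators by [x⊗a, y⊗b] := (x⊣y)⊗(a≺b) − (y⊢x)⊗(b≻a) − (y⊣x)⊗(b≺a) + (x⊢y)⊗(a≻b), for x, y ∈ D and a, b ∈ E, is alternating and satisfies the Jacobi identity; that is, it defines a Lie algebra structure on D⊗E. -/
open scoped TensorProduct

/-- An associative dialgebra over a field `K`. -/
class DiAlg (K : Type*) (D : Type*) [Field K] [AddCommGroup D] [Module K D] where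
  lp : D →ₗ[K] D →ₗ[K] D
  rp : D →ₗ[K] D →ₗ[K] D
  ax1 : ∀ x y z : D, lp (lp x y) z = lp x (lp y z)
  ax2 : ∀ x y z : D, lp x (lp y z) = lp x (rp y z)
  ax3 : ∀ x y z : D, lp (rp x y) z = rp x (lp y z)
  ax4 : ∀ x y z : D, rp (lp x y) z = rp x (rp y z)
  ax5 : ∀ x y z : D, rp (rp x y) z = rp x (rp y z)

/-- A dendriform algebra over a field `K`. -/
class Dendriform (K : Type*) (E : Type*) [Field K] [AddCommGroup E] [Module K E] where
  prec : E →ₗ[K] E →ₗ[K] E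
  succ : E →ₗ[K] E →ₗ[K] E
  ax_i : ∀ a b c : E, prec (prec a b) c = prec a (prec b c) + prec a (succ b c)
  ax_ii : ∀ a b c : E, prec (succ a b) c = succ a (prec b c)
  ax_iii : ∀ a b c : E, succ (prec a b) c + succ (succ a b) c = succ a (succ b c)

variable (K D E : Type*) [Field K] [AddCommGroup D] [Module K D] [AddCommGroup E] [Module K E]

/-- The bracket on `D ⊗ E`, defined on generators by
`[x⊗a, y⊗b] = (x⊣y)⊗(a≺b) − (y⊢x)⊗(b≻a) − (y⊣x)⊗(b≺a) + (x⊢y)⊗(a≻b)`. -/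
noncomputable def diDendBracket [DiAlg K D] [Dendriform K E] :
    D ⊗[K] E →ₗ[K] D ⊗[K] E →ₗ[K] D ⊗[K] E :=
  TensorProduct.map₂ (DiAlg.lp (K := K)) (Dendriform.prec (K := K))
    - TensorProduct.map₂ (DiAlg.rp (K := K)).flip (Dendriform.succ (K := K)).flip
    - TensorProduct.map₂ (DiAlg.lp (K := K)).flip (Dendriform.prec (K := K)).flip
    + TensorProduct.map₂ (DiAlg.rp (K := K)) (Dendriform.succ (K := K))


section Aux
variable [DiAlg K D] [Dendriform K E]

/-- The associative product on `D ⊗ E` given by `(x⊗a)*(y⊗b) = (x⊣y)⊗(a≺b) + (x⊢y)⊗(a≻b)`. -/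
noncomputable def diDendMul : D ⊗[K] E →ₗ[K] D ⊗[K] E →ₗ[K] D ⊗[K] E :=
  TensorProduct.map₂ (DiAlg.lp (K := K)) (Dendriform.prec (K := K))
    + TensorProduct.map₂ (DiAlg.rp (K := K)) (Dendriform.succ (K := K))

lemma diDendMul_tmul (x y : D) (a b : E) :
    diDendMul K D E (x ⊗ₜ[K] a) (y ⊗ₜ[K] b) =
      (DiAlg.lp (K := K) x y) ⊗ₜ[K] (Dendriform.prec (K := K) a b)
        + (DiAlg.rp (K := K) x y) ⊗ₜ[K] (Dendriform.succ (K := K) a b) := by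
  simp [diDendMul, TensorProduct.map₂_apply_tmul]

lemma diDendMul_assoc (t u v : D ⊗[K] E) :
    diDendMul K D E (diDendMul K D E t u) v = diDendMul K D E t (diDendMul K D E u v) := by
  induction t using TensorProduct.induction_on with
  | zero => simp
  | add t₁ t₂ h₁ h₂ => simp [map_add, LinearMap.add_apply, h₁, h₂]
  | tmul x a =>
    induction u using TensorProduct.induction_on with
    | zero => simp
    | add u₁ u₂ h₁ h₂ => simp [map_add, LinearMap.add_apply, h₁, h₂]
    | tmul y b =>
      induction v using TensorProduct.induction_on with
      | zero => simp
      | add v₁ v₂ h₁ h₂ => simp only [map_add] at h₁ h₂ ⊢; rw [h₁, h₂]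
      | tmul z c =>
        simp only [diDendMul_tmul, map_add, LinearMap.add_apply, diDendMul_tmul,
          TensorProduct.tmul_add]
        simp only [DiAlg.ax1, DiAlg.ax3, DiAlg.ax4, DiAlg.ax5, Dendriform.ax_i,
          Dendriform.ax_ii, ← Dendriform.ax_iii, TensorProduct.tmul_add, DiAlg.ax2]
        abel

lemma diDendBracket_eq (t u : D ⊗[K] E) :
    diDendBracket K D E t u = diDendMul K D E t u - diDendMul K D E u t := by
  induction t using TensorProduct.induction_on with
  | zero => simp
  | add t₁ t₂ h₁ h₂ => simp only [map_add, LinearMap.add_apply, h₁, h₂]; abel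
  | tmul x a =>
    induction u using TensorProduct.induction_on with
    | zero => simp
    | add u₁ u₂ h₁ h₂ => simp only [map_add, LinearMap.add_apply, h₁, h₂]; abel
    | tmul y b =>
      simp only [diDendBracket, diDendMul, LinearMap.add_apply, LinearMap.sub_apply,
        TensorProduct.map₂_apply_tmul, TensorProduct.map_tmul, LinearMap.flip_apply]
      abel

end Aux

/-- Let `D` be an associative dialgebra and `E` a dendriform algebra over a field `K`.
The bracket on `D ⊗ E` given on generators by
`[x⊗a, y⊗b] := (x⊣y)⊗(a≺b) − (y⊢x)⊗(b≻a) − (y⊣x)⊗(b≺a) + (x⊢y)⊗(a≻b)`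
is alternating and satisfies the Jacobi identity, i.e. it defines a Lie algebra
structure on `D ⊗ E`. -/
theorem diDendBracket_lie [DiAlg K D] [Dendriform K E] :
    (∀ x y : D, ∀ a b : E,
        diDendBracket K D E (x ⊗ₜ[K] a) (y ⊗ₜ[K] b) =
          (DiAlg.lp (K := K) x y) ⊗ₜ[K] (Dendriform.prec (K := K) a b)
            - (DiAlg.rp (K := K) y x) ⊗ₜ[K] (Dendriform.succ (K := K) b a)
            - (DiAlg.lp (K := K) y x) ⊗ₜ[K] (Dendriform.prec (K := K) b a)
            + (DiAlg.rp (K := K) x y) ⊗ₜ[K] (Dendriform.succ (K := K) a b)) ∧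
    (∀ t : D ⊗[K] E, diDendBracket K D E t t = 0) ∧
    (∀ t u v : D ⊗[K] E,
        diDendBracket K D E (diDendBracket K D E t u) v
          + diDendBracket K D E (diDendBracket K D E u v) t
          + diDendBracket K D E (diDendBracket K D E v t) u = 0) := by
  refine ⟨?_, ?_, ?_⟩
  · intro x y a b
    simp only [diDendBracket, LinearMap.add_apply, LinearMap.sub_apply,
      TensorProduct.map₂_apply_tmul, TensorProduct.map_tmul, LinearMap.flip_apply]
  · intro t
    rw [diDendBracket_eq, sub_self]
  · intro t u v
    simp only [diDendBracket_eq, map_sub, LinearMap.sub_apply, diDendMul_assoc]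
    abel
end
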